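/- For every edge e of G, deleting e from G creates an induced path on 6 vertices. -/

import Mathlib

open SimpleGraph

/-- The set of nonzero cubes in a field. -/
def cubes (F : Type) [Field F] : Set F := {s | ∃ x : F, x ≠ 0 ∧ x ^ 3 = s}

/-- The Cayley graph on `F` with connection set the nonzero cubes:
`x ~ y` iff `x - y` is a nonzero cube. -/
def cayley (F : Type) [Field F] : SimpleGraph F :=
  SimpleGraph.fromRel (fun x y => x - y ∈ cubes F)

/-- `v : Fin n → V` is an induced path on `n` vertices in `G`. -/
def IsInducedPath {V : Type} (G : SimpleGraph V) {n : ℕ} (v : Fin n → V) : Prop :=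
  Function.Injective v ∧
    ∀ i j : Fin n, G.Adj (v i) (v j) ↔ (i.val + 1 = j.val ∨ j.val + 1 = i.val)

/-!
The nonzero cubes of `𝔽₁₆` are exactly the fifth roots of unity. For a primitive fifth root of
unity `ω`, the points `0, ω, ω + ω², 1 + ω + ω², 1 + ω², 1` form an induced hexagon in `G`: the
differences of consecutive points are `ω`, `ω²` and `1`, while in characteristic `2` every other
difference is `1 + ω` up to squaring or a factor `ωᵏ`, and `(1 + ω)⁵ = ω + ω⁴ ≠ 1`. The maps
`z ↦ s z + t` with `s` a nonzero cube are automorphisms of `G`, so every edge `{x, y}` is the edge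
`{1, 0}` of an induced hexagon, and deleting it leaves an induced path on six vertices.
-/

namespace SimpleGraph

theorem cycleGraph_deleteEdges_last_zero (n : ℕ) :
    (cycleGraph (n + 3)).deleteEdges {s(Fin.last _, 0)} = pathGraph (n + 3) := by
  ext i j
  rw [deleteEdges_adj, cycleGraph_adj', pathGraph_adj, Set.mem_singleton_iff, Sym2.eq_iff]
  rcases lt_trichotomy i j with h | rfl | h
  · rw [Fin.coe_sub_iff_lt.mpr h, Fin.coe_sub_iff_le.mpr h.le]
    simp only [Fin.ext_iff, Fin.val_last, Fin.val_zero, Fin.lt_def] at h ⊢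
    omega
  · simp
  · rw [Fin.coe_sub_iff_le.mpr h.le, Fin.coe_sub_iff_lt.mpr h]
    simp only [Fin.ext_iff, Fin.val_last, Fin.val_zero, Fin.lt_def] at h ⊢
    omega

namespace Embedding

variable {V W : Type} {G : SimpleGraph V} {H : SimpleGraph W}

theorem isInducedPath_deleteEdges {n : ℕ} (f : cycleGraph (n + 3) ↪g G) :
    IsInducedPath (G.deleteEdges {s(f (Fin.last _), f 0)}) f := by
  refine ⟨f.injective, fun i j => ?_⟩
  rw [deleteEdges_adj, f.map_adj_iff, Set.mem_singleton_iff, ← Sym2.map_mk, ← Sym2.map_mk,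
    (Sym2.map.injective f.injective).eq_iff, ← Set.mem_singleton_iff, ← deleteEdges_adj,
    cycleGraph_deleteEdges_last_zero, pathGraph_adj]

def ofAdjIff (f : V → W) (hG : ∀ u v, (∀ w, G.Adj u w ↔ G.Adj v w) → u = v)
    (hf : ∀ u v, H.Adj (f u) (f v) ↔ G.Adj u v) : G ↪g H where
  toFun := f
  inj' u v h := hG u v fun w => by rw [← hf, ← hf, h]
  map_rel_iff' := hf _ _

end Embedding

end SimpleGraph

section Cubes

variable {F : Type} [Field F]

theorem neg_mem_cubes_iff {u : F} : -u ∈ cubes F ↔ u ∈ cubes F := by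
  suffices h : ∀ u : F, u ∈ cubes F → -u ∈ cubes F from
    ⟨fun hu => neg_neg u ▸ h _ hu, h u⟩
  rintro _ ⟨t, ht, rfl⟩
  exact ⟨-t, neg_ne_zero.mpr ht, by ring⟩

theorem ne_zero_of_mem_cubes {u : F} (hu : u ∈ cubes F) : u ≠ 0 := by
  obtain ⟨t, ht, rfl⟩ := hu
  exact pow_ne_zero 3 ht

theorem mul_mem_cubes_iff {s u : F} (hs : s ∈ cubes F) : s * u ∈ cubes F ↔ u ∈ cubes F := by
  obtain ⟨r, hr, rfl⟩ := hs
  constructor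
  · rintro ⟨t, ht, htu⟩
    refine ⟨t / r, div_ne_zero ht hr, ?_⟩
    rw [div_pow, htu]
    field_simp
  · rintro ⟨t, ht, rfl⟩
    exact ⟨r * t, mul_ne_zero hr ht, by ring⟩

theorem sq_mem_cubes_iff {u : F} : u ^ 2 ∈ cubes F ↔ u ∈ cubes F := by
  constructor
  · rintro ⟨t, ht, htu⟩
    have hu : u ≠ 0 := by rintro rfl; simp_all
    refine ⟨u / t, div_ne_zero hu ht, ?_⟩
    rw [div_pow, htu]
    field_simp
  · rintro ⟨t, ht, rfl⟩
    exact ⟨t ^ 2, pow_ne_zero 2 ht, by ring⟩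

theorem cayley_adj_iff {u v : F} : (cayley F).Adj u v ↔ u - v ∈ cubes F := by
  rw [cayley, fromRel_adj, ← neg_sub u v, neg_mem_cubes_iff, or_self, and_iff_right_iff_imp]
  exact fun h => sub_ne_zero.mp (ne_zero_of_mem_cubes h)

def cayleyAffineEmbedding {s : F} (hs : s ∈ cubes F) (t : F) : cayley F ↪g cayley F where
  toFun z := s * z + t
  inj' p q h := mul_left_cancel₀ (ne_zero_of_mem_cubes hs) (add_right_cancel h)
  map_rel_iff' {p q} := by
    change (cayley F).Adj (s * p + t) (s * q + t) ↔ _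
    rw [cayley_adj_iff, cayley_adj_iff, add_sub_add_right_eq_sub, ← mul_sub, mul_mem_cubes_iff hs]

def hexagon (a b c : F) : Fin 6 → F := ![0, a, a + b, a + b + c, b + c, c]

theorem mem_cubes_iff_of_sq_eq_sq {u t : F} (h : u ^ 2 = t ^ 2) :
    u ∈ cubes F ↔ t ∈ cubes F := by
  rcases sq_eq_sq_iff_eq_or_eq_neg.mp h with rfl | rfl
  exacts [Iff.rfl, neg_mem_cubes_iff]

theorem hexagon_sub_mem_cubes_iff {a b c : F} (ha : a ∈ cubes F) (hb : b ∈ cubes F)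
    (hc : c ∈ cubes F) (hab : a + b ∉ cubes F) (hbc : b + c ∉ cubes F)
    (hca : c - a ∉ cubes F) (habc : a + b + c ∉ cubes F) (hbca : b + c - a ∉ cubes F)
    (hcab : c - a - b ∉ cubes F) (i j : Fin 6) :
    hexagon a b c i - hexagon a b c j ∈ cubes F ↔ (cycleGraph 6).Adj i j := by
  have h0 : (0 : F) ∉ cubes F := fun h => ne_zero_of_mem_cubes h rfl
  fin_cases i <;> fin_cases j <;>
    simp only [hexagon, Fin.reduceFinMk, Fin.zero_eta, Matrix.cons_val, sub_self] <;>
  first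
  | exact iff_of_false h0 (by decide)
  | exact iff_of_true ((mem_cubes_iff_of_sq_eq_sq (by ring1)).mpr ha) (by decide)
  | exact iff_of_true ((mem_cubes_iff_of_sq_eq_sq (by ring1)).mpr hb) (by decide)
  | exact iff_of_true ((mem_cubes_iff_of_sq_eq_sq (by ring1)).mpr hc) (by decide)
  | exact iff_of_false ((mem_cubes_iff_of_sq_eq_sq (by ring1)).not.mpr hab) (by decide)
  | exact iff_of_false ((mem_cubes_iff_of_sq_eq_sq (by ring1)).not.mpr hbc) (by decide)
  | exact iff_of_false ((mem_cubes_iff_of_sq_eq_sq (by ring1)).not.mpr hca) (by decide)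
  | exact iff_of_false ((mem_cubes_iff_of_sq_eq_sq (by ring1)).not.mpr habc) (by decide)
  | exact iff_of_false ((mem_cubes_iff_of_sq_eq_sq (by ring1)).not.mpr hbca) (by decide)
  | exact iff_of_false ((mem_cubes_iff_of_sq_eq_sq (by ring1)).not.mpr hcab) (by decide)

def hexagonEmbedding {a b c : F} (ha : a ∈ cubes F) (hb : b ∈ cubes F)
    (hc : c ∈ cubes F) (hab : a + b ∉ cubes F) (hbc : b + c ∉ cubes F)
    (hca : c - a ∉ cubes F) (habc : a + b + c ∉ cubes F) (hbca : b + c - a ∉ cubes F)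
    (hcab : c - a - b ∉ cubes F) :
    cycleGraph 6 ↪g cayley F :=
  .ofAdjIff (hexagon a b c) (by decide) fun i j =>
    cayley_adj_iff.trans (hexagon_sub_mem_cubes_iff ha hb hc hab hbc hca habc hbca hcab i j)

variable [Fintype F]

theorem charP_two_of_card_eq_two_pow {k : ℕ} (hF : Fintype.card F = 2 ^ (k + 1)) : CharP F 2 := by
  have h : (2 : F) ^ (k + 1) = 0 := by
    exact_mod_cast hF ▸ FiniteField.cast_card_eq_zero F
  exact CharTwo.of_one_ne_zero_of_two_eq_zero one_ne_zero (pow_eq_zero_iff k.succ_ne_zero |>.mp h)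

theorem mem_cubes_iff_pow_five_eq_one (hF : Fintype.card F = 16) {u : F} :
    u ∈ cubes F ↔ u ^ 5 = 1 := by
  constructor
  · rintro ⟨t, ht, rfl⟩
    rw [← pow_mul, show 3 * 5 = Fintype.card F - 1 by rw [hF],
      FiniteField.pow_card_sub_one_eq_one t ht]
  · intro hu
    have hu0 : u ≠ 0 := by rintro rfl; simp at hu
    exact ⟨u ^ 2, pow_ne_zero 2 hu0, by linear_combination u * hu⟩

theorem exists_isPrimitiveRoot_five (hF : Fintype.card F = 16) :
    ∃ ω : F, IsPrimitiveRoot ω 5 := by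
  have : Fact (Nat.Prime 5) := ⟨by norm_num⟩
  obtain ⟨g, hg⟩ := exists_prime_orderOf_dvd_card' (G := Fˣ) 5
    (by rw [Nat.card_units, Nat.card_eq_fintype_card, hF]; norm_num)
  exact ⟨g, IsPrimitiveRoot.coe_units_iff.mpr (hg ▸ IsPrimitiveRoot.orderOf g)⟩

theorem IsPrimitiveRoot.one_add_notMem_cubes {ω : F} (hω : IsPrimitiveRoot ω 5)
    (hF : Fintype.card F = 16) : 1 + ω ∉ cubes F := by
  have : CharP F 2 := charP_two_of_card_eq_two_pow (k := 3) hF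
  rw [mem_cubes_iff_pow_five_eq_one hF]
  intro h
  have hgeom : 1 + ω + ω ^ 2 + ω ^ 3 + ω ^ 4 = 0 := by
    simpa [Finset.sum_range_succ] using hω.geom_sum_eq_zero (by norm_num)
  have h2 := CharTwo.two_eq_zero (R := F)
  -- in characteristic `2`, `(1 + ω)⁵ - 1 = ω + ω⁴ + 1 = ω² + ω³` modulo `1 + ω + ⋯ + ω⁴`
  have : ω ^ 2 * (1 + ω) = 0 := by
    linear_combination
      h - hω.pow_eq_one - hgeom - (2 * ω + 4 * ω ^ 2 + 4 * ω ^ 3 + 2 * ω ^ 4) * h2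
  rcases mul_eq_zero.mp this with h | h
  · exact hω.ne_zero (by norm_num) (pow_eq_zero_iff two_ne_zero |>.mp h)
  · exact hω.ne_one (by norm_num) (CharTwo.add_eq_zero.mp h).symm

theorem exists_cycleGraph_six_embedding_cayley (hF : Fintype.card F = 16) :
    ∃ f : cycleGraph 6 ↪g cayley F, f (Fin.last 5) = 1 ∧ f 0 = 0 := by
  have : CharP F 2 := charP_two_of_card_eq_two_pow (k := 3) hF
  obtain ⟨ω, hω⟩ := exists_isPrimitiveRoot_five hF
  have hgeom : 1 + ω + ω ^ 2 + ω ^ 3 + ω ^ 4 = 0 := by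
    simpa [Finset.sum_range_succ] using hω.geom_sum_eq_zero (by norm_num)
  have h2 := CharTwo.two_eq_zero (R := F)
  have hcube : ∀ k, ω ^ k ∈ cubes F := fun k => (mem_cubes_iff_pow_five_eq_one hF).mpr <| by
    rw [← pow_mul, mul_comm, pow_mul, hω.pow_eq_one, one_pow]
  have hnc := hω.one_add_notMem_cubes hF
  have hnc_sq : (1 + ω) ^ 2 ∉ cubes F := sq_mem_cubes_iff.not.mpr hnc
  have hnc_mul : ∀ k, ω ^ k * (1 + ω) ∉ cubes F := fun k =>
    (mul_mem_cubes_iff (hcube k)).not.mpr hnc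
  refine ⟨hexagonEmbedding (a := ω) (b := ω ^ 2) (c := 1) (by simpa using hcube 1) (hcube 2)
    (by simpa using hcube 0) ?_ ?_ ?_ ?_ ?_ ?_, rfl, rfl⟩
  · convert hnc_mul 1 using 2; ring
  · convert hnc_sq using 2; linear_combination (-ω) * h2
  · convert hnc using 2; linear_combination (-ω) * h2
  · convert hnc_mul 3 using 2; linear_combination hgeom - (ω ^ 3 + ω ^ 4) * h2
  · convert hnc_mul 3 using 2; linear_combination hgeom - (ω + ω ^ 3 + ω ^ 4) * h2
  · convert hnc_mul 3 using 2; linear_combination hgeom - (ω + ω ^ 2 + ω ^ 3 + ω ^ 4) * h2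

end Cubes

theorem stmt15 (F : Type) [Field F] [Fintype F] (hF : Fintype.card F = 16)
    (x y : F) (hxy : (cayley F).Adj x y) :
    ∃ v : Fin 6 → F, IsInducedPath ((cayley F).deleteEdges {s(x, y)}) v := by
  obtain ⟨f, hf1, hf0⟩ := exists_cycleGraph_six_embedding_cayley hF
  let g := (cayleyAffineEmbedding (cayley_adj_iff.mp hxy) y).comp f
  have hgx : g (Fin.last 5) = x := by
    change (x - y) * f (Fin.last 5) + y = x
    rw [hf1]; ring
  have hgy : g 0 = y := by
    change (x - y) * f 0 + y = y
    rw [hf0]; ring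
  have h := g.isInducedPath_deleteEdges
  rw [hgx, hgy] at h
  exact ⟨g, h⟩
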